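/- Every autogeodesic path is an extremal: for all u, u̇ ∈ ℝ³ with u ≠ 0, substituting ü = F(u, u̇) into the Euler–Poisson expression gives 𝓔(u, u̇, F(u, u̇)) = 0. Consequently any smooth curve x with x′ ≠ 0 solving the autogeodesic-path equation x‴ = F(x′, x″) satisfies the Euler–Poisson equation 𝓔(x′, x″, x‴) = 0. -/

import Mathlib

noncomputable section
open RealInnerProductSpace

/-- Three-dimensional Euclidean space. -/
abbrev E3 := EuclideanSpace ℝ (Fin 3)

/-- The cross product on ℝ³. -/
def cross (a b : E3) : E3 :=
  (WithLp.equiv 2 (Fin 3 → ℝ)).symm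
    ![a 1 * b 2 - a 2 * b 1, a 2 * b 0 - a 0 * b 2, a 0 * b 1 - a 1 * b 0]

/-- The Euler–Poisson expression
𝓔(u, u̇, ü) = (ü × u)/‖u‖³ − 3((u̇·u)/‖u‖⁵)(u̇ × u) + (m/‖u‖³)(‖u‖² u̇ − (u̇·u) u). -/
def EP (m : ℝ) (u du ddu : E3) : E3 :=
  (‖u‖ ^ 3)⁻¹ • cross ddu u - (3 * ⟪du, u⟫ / ‖u‖ ^ 5) • cross du u
    + (m / ‖u‖ ^ 3) • (‖u‖ ^ 2 • du - ⟪du, u⟫ • u)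

/-- The right-hand side F(u, u̇) of the third-order autogeodesic-path equation
ü = F(u, u̇) of three-dimensional Euclidean space. -/
def Fauto (m A : ℝ) (u du : E3) : E3 :=
  (3 * (⟪du, u⟫ / ‖u‖ ^ 2)) • du
    - (3 * (⟪du, u⟫ ^ 2 / ‖u‖ ^ 4 - ‖du‖ ^ 2 / (2 * ‖u‖ ^ 2)
        - A * ‖cross du u‖ ^ ((4 : ℝ) / 3) / ‖u‖ ^ 2)) • u
    - m • cross u du

lemma cross_sub_left (a b c : E3) : cross (a - b) c = cross a c - cross b c := by
  ext i; fin_cases i <;> simp [cross] <;> ring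

lemma cross_smul_left (r : ℝ) (a b : E3) : cross (r • a) b = r • cross a b := by
  ext i; fin_cases i <;> simp [cross] <;> ring

lemma crossSelfE3 (a : E3) : cross a a = 0 := by
  ext i; fin_cases i <;> simp [cross] <;> ring

lemma triple (u du : E3) : cross (cross u du) u = ‖u‖ ^ 2 • du - ⟪du, u⟫ • u := by
  have h : ‖u‖ ^ 2 = ⟪u, u⟫ := (real_inner_self_eq_norm_sq u).symm
  have hi : ⟪du, u⟫ = du 0 * u 0 + du 1 * u 1 + du 2 * u 2 := by
    simp [PiLp.inner_apply, Fin.sum_univ_three, mul_comm]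
  have hu : ⟪u, u⟫ = u 0 * u 0 + u 1 * u 1 + u 2 * u 2 := by
    simp [PiLp.inner_apply, Fin.sum_univ_three, -inner_self_eq_norm_sq_to_K]
  ext i; fin_cases i <;> simp [cross, h, hi, hu, -inner_self_eq_norm_sq_to_K] <;> ring

/-- every autogeodesic path is an extremal: 𝓔(u, u̇, F(u, u̇)) = 0, and
consequently every smooth regular solution of x‴ = F(x′, x″) satisfies 𝓔 = 0. -/
theorem autogeodesic_paths_are_extremals (m A : ℝ) :
    (∀ u du : E3, u ≠ 0 → EP m u du (Fauto m A u du) = 0) ∧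
    (∀ x : ℝ → E3, ContDiff ℝ (⊤ : ℕ∞) x → (∀ ζ : ℝ, deriv x ζ ≠ 0) →
      (∀ ζ : ℝ, deriv (deriv (deriv x)) ζ
        = Fauto m A (deriv x ζ) (deriv (deriv x) ζ)) →
      ∀ ζ : ℝ, EP m (deriv x ζ) (deriv (deriv x) ζ)
        (deriv (deriv (deriv x)) ζ) = 0) := by
  have main : ∀ u du : E3, u ≠ 0 → EP m u du (Fauto m A u du) = 0 := by
    intro u du hu
    have h0 : ‖u‖ ≠ 0 := norm_ne_zero_iff.mpr hu
    unfold EP Fauto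
    rw [cross_sub_left, cross_sub_left, cross_smul_left, cross_smul_left, cross_smul_left,
      crossSelfE3, triple]
    match_scalars <;> field_simp <;> ring
  exact ⟨main, fun x _ hx' hx ζ => by rw [hx ζ]; exact main _ _ (hx' ζ)⟩
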